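/- Let A, B, r, θ ∈ ℝ with r ≠ 0, and let U ⊆ ℝ² be an open set on which A·exp(r·(cos θ·x + sin θ·y)) + B > 0. Define λ(x,y) = (1/2)·log(A·exp(r·(cos θ·x + sin θ·y)) + B) and f(x,y) = r·(cos θ·x + sin θ·y) on U. Then D₁(λ,f) = 0 and D₂(λ,f) = 0 on U. -/

import Mathlib

noncomputable def dx (f : ℝ → ℝ → ℝ) : ℝ → ℝ → ℝ := fun x y => deriv (fun t => f t y) x
noncomputable def dy (f : ℝ → ℝ → ℝ) : ℝ → ℝ → ℝ := fun x y => deriv (fun t => f x t) y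

/-- The operator `D₁` from the paper. -/
noncomputable def D1 (l f : ℝ → ℝ → ℝ) : ℝ → ℝ → ℝ := fun x y =>
  (dx l x y + dx f x y) * (2 * dx l x y * dx f x y + dx (dx f) x y)
  + (dy l x y + dy f x y) * (2 * dy l x y * dx f x y + dy (dx f) x y)
  - (6 * (dx l x y)^2 * dx f x y + 2 * dx (dx l) x y * dx f x y
      + 5 * dx l x y * dx (dx f) x y + dx (dx (dx f)) x y)
  - (6 * (dy l x y)^2 * dx f x y + 2 * dy (dy l) x y * dx f x y
      + 5 * dy l x y * dy (dx f) x y + dy (dy (dx f)) x y)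

/-- The operator `D₂` from the paper. -/
noncomputable def D2 (l f : ℝ → ℝ → ℝ) : ℝ → ℝ → ℝ := fun x y =>
  (dx l x y + dx f x y) * (2 * dx l x y * dy f x y + dx (dy f) x y)
  + (dy l x y + dy f x y) * (2 * dy l x y * dy f x y + dy (dy f) x y)
  - (6 * (dx l x y)^2 * dy f x y + 2 * dx (dx l) x y * dy f x y
      + 5 * dx l x y * dx (dy f) x y + dx (dx (dy f)) x y)
  - (6 * (dy l x y)^2 * dy f x y + 2 * dy (dy l) x y * dy f x y
      + 5 * dy l x y * dy (dy f) x y + dy (dy (dy f)) x y)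

/-!
With `f = r (cos θ x + sin θ y)` linear and `λ = Λ ∘ f`, every derivative of `λ` is a derivative of
`Λ` times a monomial in `a = r cos θ`, `b = r sin θ`, and all second derivatives of `f` vanish.
Hence `D₁ = 2a (a² + b²) (Λ' - 2Λ'² - Λ'')` and `D₂ = 2b (a² + b²) (Λ' - 2Λ'² - Λ'')`, so both
vanish wherever `Λ'' = Λ' - 2Λ'²`. For `Λ w = ½ log (A eʷ + B)` one has `Λ' = A eʷ / (2 (A eʷ + B))`
and `Λ'' = A eʷ B / (2 (A eʷ + B)²) = Λ' (1 - 2Λ')`.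
-/

open Topology

noncomputable def linearForm (r c s : ℝ) : ℝ → ℝ → ℝ := fun x y => r * (c * x + s * y)

section LinearForm

variable (r c s : ℝ)

theorem hasDerivAt_linearForm_fst (x y : ℝ) :
    HasDerivAt (fun t => linearForm r c s t y) (r * c) x := by
  simpa [linearForm] using (((hasDerivAt_id x).const_mul c).add_const (s * y)).const_mul r

theorem hasDerivAt_linearForm_snd (x y : ℝ) :
    HasDerivAt (fun t => linearForm r c s x t) (r * s) y := by
  simpa [linearForm] using (((hasDerivAt_id y).const_mul s).const_add (c * x)).const_mul r

theorem dx_const (k : ℝ) : dx (fun _ _ => k) = fun _ _ => 0 := by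
  funext x y; simp [dx]

theorem dy_const (k : ℝ) : dy (fun _ _ => k) = fun _ _ => 0 := by
  funext x y; simp [dy]

theorem dx_linearForm : dx (linearForm r c s) = fun _ _ => r * c := by
  funext x y; exact (hasDerivAt_linearForm_fst r c s x y).deriv

theorem dy_linearForm : dy (linearForm r c s) = fun _ _ => r * s := by
  funext x y; exact (hasDerivAt_linearForm_snd r c s x y).deriv

variable {Λ Λ' : ℝ → ℝ} {Λ₁ Λ₂ : ℝ} (x y : ℝ)

theorem dx_comp_linearForm (h : HasDerivAt Λ Λ₁ (linearForm r c s x y)) :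
    dx (fun x y => Λ (linearForm r c s x y)) x y = Λ₁ * (r * c) :=
  (h.comp x (hasDerivAt_linearForm_fst r c s x y)).deriv

theorem dy_comp_linearForm (h : HasDerivAt Λ Λ₁ (linearForm r c s x y)) :
    dy (fun x y => Λ (linearForm r c s x y)) x y = Λ₁ * (r * s) :=
  (h.comp y (hasDerivAt_linearForm_snd r c s x y)).deriv

theorem dx_dx_comp_linearForm
    (h : ∀ᶠ w in 𝓝 (linearForm r c s x y), HasDerivAt Λ (Λ' w) w)
    (h' : HasDerivAt Λ' Λ₂ (linearForm r c s x y)) :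
    dx (dx (fun x y => Λ (linearForm r c s x y))) x y = Λ₂ * (r * c) * (r * c) := by
  have hx := hasDerivAt_linearForm_fst r c s x y
  have heq : (fun t => dx (fun x y => Λ (linearForm r c s x y)) t y) =ᶠ[𝓝 x]
      fun t => Λ' (linearForm r c s t y) * (r * c) :=
    (hx.continuousAt.eventually h).mono fun t ht => dx_comp_linearForm r c s t y ht
  exact heq.deriv_eq.trans ((h'.comp x hx).mul_const (r * c)).deriv

theorem dy_dy_comp_linearForm
    (h : ∀ᶠ w in 𝓝 (linearForm r c s x y), HasDerivAt Λ (Λ' w) w)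
    (h' : HasDerivAt Λ' Λ₂ (linearForm r c s x y)) :
    dy (dy (fun x y => Λ (linearForm r c s x y))) x y = Λ₂ * (r * s) * (r * s) := by
  have hy := hasDerivAt_linearForm_snd r c s x y
  have heq : (fun t => dy (fun x y => Λ (linearForm r c s x y)) x t) =ᶠ[𝓝 y]
      fun t => Λ' (linearForm r c s x t) * (r * s) :=
    (hy.continuousAt.eventually h).mono fun t ht => dy_comp_linearForm r c s x t ht
  exact heq.deriv_eq.trans ((h'.comp y hy).mul_const (r * s)).deriv

theorem D1_comp_linearForm
    (h : ∀ᶠ w in 𝓝 (linearForm r c s x y), HasDerivAt Λ (Λ' w) w)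
    (h' : HasDerivAt Λ' Λ₂ (linearForm r c s x y)) :
    D1 (fun x y => Λ (linearForm r c s x y)) (linearForm r c s) x y =
      2 * (r * c) * ((r * c) ^ 2 + (r * s) ^ 2) *
        (Λ' (linearForm r c s x y) - 2 * Λ' (linearForm r c s x y) ^ 2 - Λ₂) := by
  simp only [D1, dx_linearForm, dy_linearForm, dx_const, dy_const,
    dx_comp_linearForm r c s x y h.self_of_nhds, dy_comp_linearForm r c s x y h.self_of_nhds,
    dx_dx_comp_linearForm r c s x y h h', dy_dy_comp_linearForm r c s x y h h']
  ring

theorem D2_comp_linearForm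
    (h : ∀ᶠ w in 𝓝 (linearForm r c s x y), HasDerivAt Λ (Λ' w) w)
    (h' : HasDerivAt Λ' Λ₂ (linearForm r c s x y)) :
    D2 (fun x y => Λ (linearForm r c s x y)) (linearForm r c s) x y =
      2 * (r * s) * ((r * c) ^ 2 + (r * s) ^ 2) *
        (Λ' (linearForm r c s x y) - 2 * Λ' (linearForm r c s x y) ^ 2 - Λ₂) := by
  simp only [D2, dx_linearForm, dy_linearForm, dx_const, dy_const,
    dx_comp_linearForm r c s x y h.self_of_nhds, dy_comp_linearForm r c s x y h.self_of_nhds,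
    dx_dx_comp_linearForm r c s x y h h', dy_dy_comp_linearForm r c s x y h h']
  ring

end LinearForm

section HalfLogExp

variable {A B w : ℝ}

theorem hasDerivAt_half_log_exp_add (h : A * Real.exp w + B ≠ 0) :
    HasDerivAt (fun w => 1 / 2 * Real.log (A * Real.exp w + B))
      (A * Real.exp w / (2 * (A * Real.exp w + B))) w := by
  have hE := ((Real.hasDerivAt_exp w).const_mul A).add_const B
  exact ((hE.log h).const_mul (1 / 2 : ℝ)).congr_deriv (by field_simp)

theorem hasDerivAt_exp_div_exp_add (h : A * Real.exp w + B ≠ 0) :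
    HasDerivAt (fun w => A * Real.exp w / (2 * (A * Real.exp w + B)))
      (A * Real.exp w * B / (2 * (A * Real.exp w + B) ^ 2)) w := by
  have hN := (Real.hasDerivAt_exp w).const_mul A
  have hD := (hN.add_const B).const_mul 2
  exact (hN.div hD (mul_ne_zero two_ne_zero h)).congr_deriv (by field_simp; ring)

end HalfLogExp

theorem stmt9_general (A B r θ : ℝ) (U : Set (ℝ × ℝ))
    (hpos : ∀ p ∈ U, A * Real.exp (r * (Real.cos θ * p.1 + Real.sin θ * p.2)) + B > 0) :
    ∀ p ∈ U,
      D1 (fun x y => (1/2) * Real.log (A * Real.exp (r * (Real.cos θ * x + Real.sin θ * y)) + B))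
         (fun x y => r * (Real.cos θ * x + Real.sin θ * y)) p.1 p.2 = 0 ∧
      D2 (fun x y => (1/2) * Real.log (A * Real.exp (r * (Real.cos θ * x + Real.sin θ * y)) + B))
         (fun x y => r * (Real.cos θ * x + Real.sin θ * y)) p.1 p.2 = 0 := by
  intro p hp
  set w₀ := linearForm r (Real.cos θ) (Real.sin θ) p.1 p.2
  have hne : ∀ᶠ w in 𝓝 w₀, A * Real.exp w + B ≠ 0 :=
    (by fun_prop : Continuous fun w => A * Real.exp w + B).continuousAt.eventually_ne
      (hpos p hp).ne'
  have hΛ := hne.mono fun w hw => hasDerivAt_half_log_exp_add hw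
  have hΛ' := hasDerivAt_exp_div_exp_add hne.self_of_nhds
  have hode : A * Real.exp w₀ / (2 * (A * Real.exp w₀ + B))
      - 2 * (A * Real.exp w₀ / (2 * (A * Real.exp w₀ + B))) ^ 2
      - A * Real.exp w₀ * B / (2 * (A * Real.exp w₀ + B) ^ 2) = 0 := by
    field_simp [hne.self_of_nhds]
    ring
  exact ⟨(D1_comp_linearForm r _ _ p.1 p.2 hΛ hΛ').trans (by rw [hode, mul_zero]),
    (D2_comp_linearForm r _ _ p.1 p.2 hΛ hΛ').trans (by rw [hode, mul_zero])⟩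

theorem stmt9 (A B r θ : ℝ) (hr : r ≠ 0) (U : Set (ℝ × ℝ)) (hU : IsOpen U)
    (hpos : ∀ p ∈ U, A * Real.exp (r * (Real.cos θ * p.1 + Real.sin θ * p.2)) + B > 0) :
    ∀ p ∈ U,
      D1 (fun x y => (1/2) * Real.log (A * Real.exp (r * (Real.cos θ * x + Real.sin θ * y)) + B))
         (fun x y => r * (Real.cos θ * x + Real.sin θ * y)) p.1 p.2 = 0 ∧
      D2 (fun x y => (1/2) * Real.log (A * Real.exp (r * (Real.cos θ * x + Real.sin θ * y)) + B))
         (fun x y => r * (Real.cos θ * x + Real.sin θ * y)) p.1 p.2 = 0 :=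
  stmt9_general A B r θ U hpos
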